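/- arXiv:2411.07818 — 2 statements merged into one kernel-verified Lean document; each statement's English description precedes it below -/
import Mathlib

section
/- Let λ : Fin n → ℝ be nonnegative with ∑ᵢ λᵢ = 1 (n ≥ 1), and let m(x,y) be any function on [0,∞)² satisfying m(x,y) ≤ (x+y)/2, m(x,x) = x, and m(x,0) = m(0,y) = 0. Then ∑_{i,j} m(λᵢ, λⱼ) ≤ n, with equality if and only if λᵢ = 1/n for all i. -/
theorem sum_mean_le_card (n : ℕ) (hn : 1 ≤ n) (lam : Fin n → ℝ)
    (hpos : ∀ i, 0 ≤ lam i) (hsum : ∑ i, lam i = 1)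
    (m : ℝ → ℝ → ℝ)
    (hle : ∀ x y : ℝ, 0 ≤ x → 0 ≤ y → m x y ≤ (x + y) / 2)
    (hdiag : ∀ x : ℝ, 0 ≤ x → m x x = x)
    (hz1 : ∀ x : ℝ, 0 ≤ x → m x 0 = 0)
    (hz2 : ∀ y : ℝ, 0 ≤ y → m 0 y = 0)
    (hstrict : ∀ x y : ℝ, 0 < x → 0 < y → m x y = (x + y) / 2 → x = y) :
    (∑ i, ∑ j, m (lam i) (lam j)) ≤ (n : ℝ) ∧
    ((∑ i, ∑ j, m (lam i) (lam j)) = (n : ℝ) ↔ ∀ i, lam i = 1 / n) := by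
  have hn0 : (0 : ℝ) < n := by positivity
  have hT : ∑ i, ∑ j, (lam i + lam j) / 2 = (n : ℝ) := by
    have : ∀ i : Fin n, ∑ j, (lam i + lam j) / 2 = ((n : ℝ) * lam i + 1) / 2 := by
      intro i
      rw [← Finset.sum_div, Finset.sum_add_distrib, Finset.sum_const, hsum]
      simp [mul_comm]
    rw [Finset.sum_congr rfl (fun i _ => this i), ← Finset.sum_div,
      Finset.sum_add_distrib, ← Finset.mul_sum, hsum, Finset.sum_const]
    simp
  have hle' : ∀ i ∈ Finset.univ, ∑ j, m (lam i) (lam j) ≤ ∑ j, (lam i + lam j) / 2 := by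
    intro i _
    exact Finset.sum_le_sum fun j _ => hle _ _ (hpos i) (hpos j)
  have hb : (∑ i, ∑ j, m (lam i) (lam j)) ≤ (n : ℝ) := by
    calc (∑ i, ∑ j, m (lam i) (lam j)) ≤ ∑ i, ∑ j, (lam i + lam j) / 2 :=
          Finset.sum_le_sum hle'
      _ = (n : ℝ) := hT
  refine ⟨hb, ?_, ?_⟩
  · intro heq
    have hterm : ∀ i : Fin n, ∀ j : Fin n, m (lam i) (lam j) = (lam i + lam j) / 2 := by
      have h1 := (Finset.sum_eq_sum_iff_of_le hle').mp (heq.trans hT.symm)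
      intro i j
      have h2 := (Finset.sum_eq_sum_iff_of_le
        (fun j _ => hle _ _ (hpos i) (hpos j))).mp (h1 i (Finset.mem_univ i))
      exact h2 j (Finset.mem_univ j)
    obtain ⟨k, hk⟩ : ∃ k, 0 < lam k := by
      by_contra h
      push_neg at h
      have : ∀ i, lam i = 0 := fun i => le_antisymm (h i) (hpos i)
      simp [this] at hsum
    have hall : ∀ j, 0 < lam j := by
      intro j
      rcases (hpos j).lt_or_eq with h | h
      · exact h
      · exfalso
        have := hterm k j
        rw [← h, hz1 _ (hpos k)] at this
        linarith
    have heqv : ∀ i, lam i = lam k := fun i =>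
      hstrict _ _ (hall i) (hall k) (hterm i k)
    intro i
    have : (n : ℝ) * lam k = 1 := by
      rw [← hsum, Finset.sum_congr rfl (fun i _ => heqv i), Finset.sum_const]
      simp [mul_comm]
    have hk1 : lam k = 1 / n := by field_simp at this ⊢; linarith
    rw [heqv i, hk1]
  · intro h
    have h1n : (0:ℝ) ≤ 1 / n := by positivity
    have : ∀ i : Fin n, ∀ j : Fin n, m (lam i) (lam j) = 1 / n := by
      intro i j; rw [h i, h j, hdiag _ h1n]
    rw [Finset.sum_congr rfl (fun i _ => Finset.sum_congr rfl (fun j _ => this i j))]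
    simp
    field_simp
end

section
/- For a qubit density matrix ρ with Bloch vector (r₁,r₂,r₃), r = √(r₁²+r₂²+r₃²) ≤ 1, and the SLD function f(x) = (1+x)/2 (harmonic mean m(x,y) = 2xy/(x+y)), one has P_SLD(ρ) = r₃², V_SLD(ρ) = r² − r₃², and S_SLD(ρ) = 1 − r², so that P + V + S = 1. -/
lemma mdiag (x : ℝ) : 2 * x * x / (x + x) = x := by
  rcases eq_or_ne x 0 with h | h
  · subst h; norm_num
  · have h2 : x + x ≠ 0 := by intro h0; apply h; linarith
    rw [div_eq_iff h2]; ring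

lemma msum (m : ℝ → ℝ → ℝ) (hm : ∀ x y : ℝ, m x y = 2 * x * y / (x + y)) (x : ℝ) :
    m ((1 + x) / 2) ((1 + x) / 2) + m ((1 + x) / 2) ((1 - x) / 2)
      + m ((1 - x) / 2) ((1 + x) / 2) + m ((1 - x) / 2) ((1 - x) / 2) = 2 - x ^ 2 := by
  have h1 := mdiag ((1 + x) / 2)
  have h2 := mdiag ((1 - x) / 2)
  have h3 : (1 + x) / 2 + (1 - x) / 2 = 1 := by ring
  rw [hm, hm, hm, hm, h1, h2, h3]
  ring

theorem qubit_SLD_complementarity (r1 r2 r3 r : ℝ)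
    (hrdef : r = Real.sqrt (r1 ^ 2 + r2 ^ 2 + r3 ^ 2)) (hr : r ≤ 1)
    (m : ℝ → ℝ → ℝ) (hm : ∀ x y : ℝ, m x y = 2 * x * y / (x + y))
    (P V S : ℝ)
    (hP : P = 2 - (m ((1 + r3) / 2) ((1 + r3) / 2) + m ((1 + r3) / 2) ((1 - r3) / 2)
        + m ((1 - r3) / 2) ((1 + r3) / 2) + m ((1 - r3) / 2) ((1 - r3) / 2)))
    (hV : V = (m ((1 + r3) / 2) ((1 + r3) / 2) + m ((1 + r3) / 2) ((1 - r3) / 2)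
        + m ((1 - r3) / 2) ((1 + r3) / 2) + m ((1 - r3) / 2) ((1 - r3) / 2))
        - (m ((1 + r) / 2) ((1 + r) / 2) + m ((1 + r) / 2) ((1 - r) / 2)
        + m ((1 - r) / 2) ((1 + r) / 2) + m ((1 - r) / 2) ((1 - r) / 2)))
    (hS : S = (m ((1 + r) / 2) ((1 + r) / 2) + m ((1 + r) / 2) ((1 - r) / 2)
        + m ((1 - r) / 2) ((1 + r) / 2) + m ((1 - r) / 2) ((1 - r) / 2)) - 1) :
    P = r3 ^ 2 ∧ V = r ^ 2 - r3 ^ 2 ∧ S = 1 - r ^ 2 ∧ P + V + S = 1 := by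
  rw [msum m hm r3] at hP hV
  rw [msum m hm r] at hV hS
  refine ⟨by linarith, by linarith, by linarith, by linarith⟩
end
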